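/- Let 0 < γ < 1 and define ν(ζ,τ) = ζ E_γ(τ^γ) for ζ ∈ ℝ, τ ≥ 0. Then ν(ζ,0) = ζ for all ζ, and for every ζ ∈ ℝ and τ > 0, ν solves the nonlinear time-fractional Fokker–Planck equation D^γ_τ ν(ζ,τ) = −∂_ζ(3 ν(ζ,τ)² − (ζ/2) ν(ζ,τ)) + ∂²_{ζζ}(ζ ν(ζ,τ)²), where D^γ_τ is the Caputo time-fractional derivative. -/

import Mathlib

open MeasureTheory Real Filter

/-- The Mittag-Leffler function `E_γ(x) = Σ_{n=0}^∞ x^n / Γ(nγ+1)`. -/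
noncomputable def mittagLeffler (γ x : ℝ) : ℝ :=
  ∑' n : ℕ, x ^ n / Real.Gamma ((n : ℝ) * γ + 1)

/-!
Termwise, `E_γ(t^γ) = Σ t^{nγ} / Γ(nγ+1)`, and a Beta integral shows that the Caputo derivative
sends `t^{(n+1)γ} / Γ((n+1)γ+1)` to `t^{nγ} / Γ(nγ+1)`; so `t ↦ E_γ(t^γ)` is fixed by `D^γ`.
Differentiating and integrating the series term by term is legitimate because it converges for
every argument: log-convexity of `Γ` gives `Γ(y) / Γ(y+γ) = O(y^{-γ})`, so the ratio test
applies. For `ν = ζ E` the right-hand side is `-(6ζE² - ζE) + 6ζE² = ζE`.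
-/

theorem integral_rpow_mul_rpow_sub {a b τ : ℝ} (ha : 0 < a) (hb : 0 < b) (hτ : 0 < τ) :
    ∫ ρ in (0:ℝ)..τ, ρ ^ (a - 1) * (τ - ρ) ^ (b - 1)
      = Gamma a * Gamma b / Gamma (a + b) * τ ^ (a + b - 1) := by
  have hbeta : Complex.betaIntegral a b = (Gamma a * Gamma b / Gamma (a + b) : ℝ) := by
    have hΓ : Gamma (a + b) ≠ 0 := (Gamma_pos_of_pos (add_pos ha hb)).ne'
    push_cast
    rw [← Complex.Gamma_ofReal, ← Complex.Gamma_ofReal, ← Complex.Gamma_ofReal, Complex.ofReal_add,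
      Complex.Gamma_mul_Gamma_eq_betaIntegral (by simpa using ha) (by simpa using hb),
      mul_div_cancel_left₀ _
        (by rwa [← Complex.ofReal_add, Complex.Gamma_ofReal, Complex.ofReal_ne_zero])]
  have hcast : ((∫ ρ in (0:ℝ)..τ, ρ ^ (a - 1) * (τ - ρ) ^ (b - 1) : ℝ) : ℂ)
      = ∫ ρ in (0:ℝ)..τ, (ρ : ℂ) ^ ((a : ℂ) - 1) * ((τ : ℂ) - ρ) ^ ((b : ℂ) - 1) := by
    rw [← intervalIntegral.integral_ofReal]
    refine intervalIntegral.integral_congr fun ρ hρ => ?_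
    rw [Set.uIcc_of_le hτ.le] at hρ
    push_cast
    rw [Complex.ofReal_cpow hρ.1, Complex.ofReal_cpow (sub_nonneg.2 hρ.2)]
    push_cast; ring
  apply Complex.ofReal_injective
  rw [hcast, Complex.betaIntegral_scaled _ _ hτ, hbeta]
  push_cast
  rw [Complex.ofReal_cpow hτ.le]
  push_cast; ring

theorem Gamma_mul_le_Gamma_add_mul_rpow {γ y : ℝ} (hγ0 : 0 < γ) (hγ1 : γ < 1) (hy : 0 < y) :
    Gamma y * y ≤ Gamma (y + γ) * (y + γ) ^ (1 - γ) := by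
  have hyγ : 0 < y + γ := by linarith
  have hΓ := Gamma_pos_of_pos hyγ
  have hconv := Gamma_mul_add_mul_le_rpow_Gamma_mul_rpow_Gamma hyγ (by linarith : 0 < y + γ + 1)
    hγ0 (sub_pos.2 hγ1) (add_sub_cancel γ 1)
  calc Gamma y * y = Gamma (γ * (y + γ) + (1 - γ) * (y + γ + 1)) := by
        rw [mul_comm, ← Gamma_add_one hy.ne']; ring_nf
    _ ≤ Gamma (y + γ) ^ γ * Gamma (y + γ + 1) ^ (1 - γ) := hconv
    _ = Gamma (y + γ) * (y + γ) ^ (1 - γ) := by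
        rw [Gamma_add_one hyγ.ne', mul_rpow hyγ.le hΓ.le, mul_left_comm, ← rpow_add hΓ,
          add_sub_cancel, rpow_one, mul_comm]

theorem summable_pow_div_Gamma_mul_add_one {γ : ℝ} (hγ0 : 0 < γ) (hγ1 : γ < 1) (x : ℝ) :
    Summable fun n : ℕ => x ^ n / Gamma (n * γ + 1) := by
  refine summable_of_ratio_norm_eventually_le (r := 1 / 2) (by norm_num) ?_
  have hlarge : ∀ᶠ n : ℕ in atTop, 4 * |x| ≤ ((n : ℝ) * γ + 1) ^ γ :=
    ((tendsto_rpow_atTop hγ0).comp <| tendsto_atTop_add_const_right _ 1 <|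
      tendsto_natCast_atTop_atTop.atTop_mul_const hγ0).eventually_ge_atTop _
  filter_upwards [hlarge] with n hn
  set y : ℝ := n * γ + 1
  have hy : 1 ≤ y := le_add_of_nonneg_left (by positivity)
  have hΓy := Gamma_pos_of_pos (by linarith : 0 < y)
  have hΓyγ := Gamma_pos_of_pos (by linarith : 0 < y + γ)
  have hgrowth : (y + γ) ^ (1 - γ) * y ^ γ ≤ 2 * y := calc
    (y + γ) ^ (1 - γ) * y ^ γ ≤ (2 * y) ^ (1 - γ) * y ^ γ := by
      gcongr
      linarith
    _ = 2 ^ (1 - γ) * y := by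
      rw [mul_rpow zero_le_two (by linarith), mul_assoc, ← rpow_add (by linarith)]; simp
    _ ≤ 2 * y := by
      gcongr; exact rpow_le_self_of_one_le one_le_two (by linarith)
  have hsmall : |x| * (y + γ) ^ (1 - γ) ≤ y / 2 := by
    nlinarith [mul_le_mul_of_nonneg_left hn (by positivity : 0 ≤ (y + γ) ^ (1 - γ))]
  have hratio : |x| * Gamma y ≤ 1 / 2 * Gamma (y + γ) := by
    refine le_of_mul_le_mul_right ?_ (by linarith : 0 < y)
    calc |x| * Gamma y * y ≤ |x| * (Gamma (y + γ) * (y + γ) ^ (1 - γ)) := by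
          rw [mul_assoc]
          exact mul_le_mul_of_nonneg_left
            (Gamma_mul_le_Gamma_add_mul_rpow hγ0 hγ1 (by linarith)) (abs_nonneg x)
      _ = Gamma (y + γ) * (|x| * (y + γ) ^ (1 - γ)) := by ring
      _ ≤ Gamma (y + γ) * (y / 2) := by gcongr
      _ = 1 / 2 * Gamma (y + γ) * y := by ring
  have hcast : ((n + 1 : ℕ) : ℝ) * γ + 1 = y + γ := by push_cast; ring
  rw [hcast, norm_div, norm_div, norm_pow, norm_pow, Real.norm_of_nonneg hΓy.le,
    Real.norm_of_nonneg hΓyγ.le, pow_succ, div_le_iff₀ hΓyγ]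
  calc ‖x‖ ^ n * ‖x‖ = ‖x‖ ^ n / Gamma y * (|x| * Gamma y) := by
        rw [Real.norm_eq_abs]; field_simp
    _ ≤ ‖x‖ ^ n / Gamma y * (1 / 2 * Gamma (y + γ)) := by gcongr
    _ = _ := by ring

theorem summable_pow_div_Gamma_mul {γ : ℝ} (hγ0 : 0 < γ) (hγ1 : γ < 1) (x : ℝ) :
    Summable fun n : ℕ => x ^ n / Gamma (n * γ) := by
  -- the `n = 0` term is `1 / Γ 0 = 0`, with Mathlib's convention `Γ 0 = 0`
  refine (summable_pow_div_Gamma_mul_add_one hγ0 hγ1 (2 * |x|)).of_norm_bounded fun n => ?_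
  rcases n.eq_zero_or_pos with rfl | hn
  · simp [Gamma_zero]
  have hnγ : 0 < (n : ℝ) * γ := by positivity
  have hΓ := Gamma_pos_of_pos hnγ
  have h2n : (n : ℝ) * γ ≤ 2 ^ n := by
    have : (n : ℝ) < 2 ^ n := by exact_mod_cast n.lt_two_pow_self
    nlinarith
  rw [norm_div, norm_pow, Real.norm_eq_abs, Real.norm_of_nonneg hΓ.le, Gamma_add_one hnγ.ne',
    mul_pow, div_le_div_iff₀ hΓ (by positivity)]
  calc |x| ^ n * (n * γ * Gamma (n * γ)) = (n * γ) * (|x| ^ n * Gamma (n * γ)) := by ring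
    _ ≤ 2 ^ n * (|x| ^ n * Gamma (n * γ)) := by gcongr
    _ = _ := by ring

theorem mittagLeffler_zero (γ : ℝ) : mittagLeffler γ 0 = 1 := by
  rw [mittagLeffler, tsum_eq_single 0 fun n hn => by simp [zero_pow hn]]
  simp

theorem rpow_natCast_mul_eq_pow {r : ℝ} (hr : 0 ≤ r) (n : ℕ) (γ : ℝ) :
    r ^ ((n : ℝ) * γ) = (r ^ γ) ^ n := by
  rw [← rpow_natCast, ← rpow_mul hr, mul_comm]

theorem mittagLeffler_rpow_eq {γ τ : ℝ} (hγ0 : 0 < γ) (hγ1 : γ < 1) (hτ : 0 ≤ τ) :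
    mittagLeffler γ (τ ^ γ) = 1 + ∑' n : ℕ, τ ^ ((n + 1) * γ) / Gamma ((n + 1) * γ + 1) := by
  rw [mittagLeffler, (summable_pow_div_Gamma_mul_add_one hγ0 hγ1 _).tsum_eq_zero_add]
  norm_num [← rpow_natCast_mul_eq_pow hτ]

theorem hasDerivAt_rpow_div_Gamma_add_one {s t : ℝ} (hs : s ≠ 0) (ht : t ≠ 0) :
    HasDerivAt (fun t => t ^ s / Gamma (s + 1)) (t ^ (s - 1) / Gamma s) t := by
  refine ((hasDerivAt_rpow_const (p := s) (Or.inl ht)).div_const (Gamma (s + 1))).congr_deriv ?_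
  rw [Gamma_add_one hs, mul_div_mul_left _ _ hs]

theorem hasDerivAt_mittagLeffler_rpow {γ t : ℝ} (hγ0 : 0 < γ) (hγ1 : γ < 1) (ht : 0 < t) :
    HasDerivAt (fun t => mittagLeffler γ (t ^ γ))
      (∑' n : ℕ, t ^ ((n + 1) * γ - 1) / Gamma ((n + 1) * γ)) t := by
  set U := Set.Ioo (t / 2) (2 * t)
  have htU : t ∈ U := ⟨by linarith, by linarith⟩
  have hUpos : ∀ r ∈ U, 0 < r := fun r hr => (half_pos ht).trans hr.1
  have hsγ : ∀ n : ℕ, 0 < ((n : ℝ) + 1) * γ := fun n => by positivity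
  have hsummable : Summable fun n : ℕ => t ^ (((n : ℝ) + 1) * γ) / Gamma ((n + 1) * γ + 1) := by
    simpa [← rpow_natCast_mul_eq_pow ht.le] using
      (summable_nat_add_iff 1).2 (summable_pow_div_Gamma_mul_add_one hγ0 hγ1 (t ^ γ))
  have hsummable_bound : Summable fun n : ℕ => ((2 * t) ^ γ) ^ (n + 1) / Gamma ((n + 1) * γ) := by
    simpa using (summable_nat_add_iff 1).2 (summable_pow_div_Gamma_mul hγ0 hγ1 ((2 * t) ^ γ))
  have hbound : ∀ (n : ℕ), ∀ r ∈ U, ‖r ^ (((n : ℝ) + 1) * γ - 1) / Gamma ((n + 1) * γ)‖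
      ≤ 2 / t * (((2 * t) ^ γ) ^ (n + 1) / Gamma ((n + 1) * γ)) := by
    intro n r hr
    have hr0 := hUpos r hr
    have hΓ := Gamma_pos_of_pos (hsγ n)
    have hinv : 1 / r ≤ 2 / t := by rw [div_le_div_iff₀ hr0 ht]; linarith [hr.1]
    have hpow : r ^ (((n : ℝ) + 1) * γ) ≤ (2 * t) ^ (((n : ℝ) + 1) * γ) :=
      rpow_le_rpow hr0.le hr.2.le (hsγ n).le
    rw [Real.norm_of_nonneg (by positivity)]
    calc r ^ (((n : ℝ) + 1) * γ - 1) / Gamma ((n + 1) * γ)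
        = 1 / r * (r ^ (((n : ℝ) + 1) * γ) / Gamma ((n + 1) * γ)) := by
          rw [rpow_sub_one hr0.ne']; ring
      _ ≤ 2 / t * ((2 * t) ^ (((n : ℝ) + 1) * γ) / Gamma ((n + 1) * γ)) := by gcongr
      _ = _ := by rw [← rpow_natCast_mul_eq_pow (by positivity), Nat.cast_succ]
  have hseries := hasDerivAt_tsum_of_isPreconnected (hsummable_bound.mul_left (2 / t)) isOpen_Ioo
    (convex_Ioo _ _).isPreconnected
    (fun n r hr => hasDerivAt_rpow_div_Gamma_add_one (hsγ n).ne' (hUpos r hr).ne') hbound htU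
    hsummable htU
  refine (hseries.const_add 1).congr_of_eventuallyEq ?_
  filter_upwards [isOpen_Ioo.mem_nhds htU] with r hr
  exact mittagLeffler_rpow_eq hγ0 hγ1 (hUpos r hr).le

noncomputable def caputoDeriv (γ : ℝ) (f : ℝ → ℝ) (τ : ℝ) : ℝ :=
  1 / Gamma (1 - γ) * ∫ ρ in (0:ℝ)..τ, deriv f ρ * (τ - ρ) ^ (-γ)

theorem caputoDeriv_const_mul (γ c : ℝ) (f : ℝ → ℝ) (τ : ℝ) :
    caputoDeriv γ (fun t => c * f t) τ = c * caputoDeriv γ f τ := by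
  simp only [caputoDeriv, deriv_const_mul_field', mul_assoc, intervalIntegral.integral_const_mul]
  ring

theorem integral_rpow_div_Gamma_mul_rpow_neg {a γ τ : ℝ} (ha : 0 < a) (hγ1 : γ < 1) (hτ : 0 < τ) :
    ∫ ρ in (0:ℝ)..τ, ρ ^ (a - 1) / Gamma a * (τ - ρ) ^ (-γ)
      = Gamma (1 - γ) * (τ ^ (a - γ) / Gamma (a - γ + 1)) := by
  have hΓ := Gamma_pos_of_pos ha
  have hbeta := integral_rpow_mul_rpow_sub ha (sub_pos.2 hγ1) hτ
  simp only [sub_sub_cancel_left] at hbeta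
  simp only [div_mul_eq_mul_div, intervalIntegral.integral_div, hbeta]
  field_simp
  ring_nf

theorem integral_deriv_mittagLeffler_rpow_mul_rpow_neg {γ τ : ℝ} (hγ0 : 0 < γ) (hγ1 : γ < 1)
    (hτ : 0 < τ) :
    ∫ ρ in (0:ℝ)..τ, deriv (fun t => mittagLeffler γ (t ^ γ)) ρ * (τ - ρ) ^ (-γ)
      = Gamma (1 - γ) * mittagLeffler γ (τ ^ γ) := by
  set F : ℕ → ℝ → ℝ := fun n ρ => ρ ^ ((n + 1) * γ - 1) / Gamma ((n + 1) * γ) * (τ - ρ) ^ (-γ)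
  have hΓ := Gamma_pos_of_pos (sub_pos.2 hγ1)
  have hterm : ∀ n : ℕ, ∫ ρ in Set.Ioc 0 τ, F n ρ
      = Gamma (1 - γ) * ((τ ^ γ) ^ n / Gamma (n * γ + 1)) := fun n => by
    rw [← intervalIntegral.integral_of_le hτ.le,
      integral_rpow_div_Gamma_mul_rpow_neg (by positivity) hγ1 hτ, ← rpow_natCast_mul_eq_pow hτ.le]
    ring_nf
  have hnonneg : ∀ n : ℕ, ∀ ρ ∈ Set.Ioc 0 τ, 0 ≤ F n ρ := fun n ρ hρ => by
    have := hρ.1; have := sub_nonneg.2 hρ.2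
    have := Gamma_pos_of_pos (s := ((n : ℝ) + 1) * γ) (by positivity)
    simp only [F]; positivity
  have hint : ∀ n : ℕ, Integrable (F n) (volume.restrict (Set.Ioc 0 τ)) := fun n =>
    .of_integral_ne_zero <| by rw [hterm]; positivity
  have hsum : Summable fun n : ℕ => ∫ ρ in Set.Ioc 0 τ, ‖F n ρ‖ := by
    refine ((summable_pow_div_Gamma_mul_add_one hγ0 hγ1 (τ ^ γ)).mul_left (Gamma (1 - γ))).congr
      fun n => ?_
    rw [← hterm]
    exact setIntegral_congr_fun measurableSet_Ioc fun ρ hρ =>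
      (Real.norm_of_nonneg (hnonneg n ρ hρ)).symm
  calc ∫ ρ in (0:ℝ)..τ, deriv (fun t => mittagLeffler γ (t ^ γ)) ρ * (τ - ρ) ^ (-γ)
      = ∫ ρ in Set.Ioc 0 τ, ∑' n, F n ρ := by
        rw [intervalIntegral.integral_of_le hτ.le]
        refine setIntegral_congr_fun measurableSet_Ioc fun ρ hρ => ?_
        rw [(hasDerivAt_mittagLeffler_rpow hγ0 hγ1 hρ.1).deriv, tsum_mul_right]
    _ = ∑' n, ∫ ρ in Set.Ioc 0 τ, F n ρ := (integral_tsum_of_summable_integral_norm hint hsum).symm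
    _ = Gamma (1 - γ) * mittagLeffler γ (τ ^ γ) := by
        rw [tsum_congr hterm, tsum_mul_left, mittagLeffler]

theorem caputoDeriv_mittagLeffler_rpow {γ τ : ℝ} (hγ0 : 0 < γ) (hγ1 : γ < 1) (hτ : 0 < τ) :
    caputoDeriv γ (fun t => mittagLeffler γ (t ^ γ)) τ = mittagLeffler γ (τ ^ γ) := by
  rw [caputoDeriv, integral_deriv_mittagLeffler_rpow_mul_rpow_neg hγ0 hγ1 hτ,
    one_div, inv_mul_cancel_left₀ (Gamma_pos_of_pos (sub_pos.2 hγ1)).ne']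

theorem fokkerPlanck_rhs_mul_const (c ζ : ℝ) :
    -(deriv (fun z => 3 * (z * c) ^ 2 - z / 2 * (z * c)) ζ)
      + deriv (deriv fun z => z * (z * c) ^ 2) ζ = ζ * c := by
  have hdrift : (fun z => 3 * (z * c) ^ 2 - z / 2 * (z * c))
      = fun z => (3 * c ^ 2 - c / 2) * z ^ 2 := by
    funext z; ring
  have hdiffusion : (fun z => z * (z * c) ^ 2) = fun z => c ^ 2 * z ^ 3 := by
    funext z; ring
  rw [hdrift, hdiffusion]
  simp only [deriv_const_mul_field', deriv_pow_field, Nat.cast_ofNat, Nat.add_one_sub_one, pow_one]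
  ring

/-- The function `ν(ζ,τ) = ζ E_γ(τ^γ)` satisfies `ν(ζ,0) = ζ` and solves the nonlinear
time-fractional Fokker–Planck equation
`D^γ_τ ν = −∂_ζ(3ν² − (ζ/2)ν) + ∂²_{ζζ}(ζν²)` for `τ > 0`,
where `D^γ_τ` is the Caputo time-fractional derivative. -/
theorem tffpe_example3 (γ : ℝ) (hγ0 : 0 < γ) (hγ1 : γ < 1)
    (ν : ℝ → ℝ → ℝ) (hν : ν = fun ζ τ => ζ * mittagLeffler γ (τ ^ γ)) :
    (∀ ζ : ℝ, ν ζ 0 = ζ) ∧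
    ∀ (ζ τ : ℝ), 0 < τ →
      (1 / Real.Gamma (1 - γ)) * (∫ ρ in (0:ℝ)..τ, deriv (fun ρ => ν ζ ρ) ρ * (τ - ρ) ^ (-γ))
        = -(deriv (fun z => 3 * (ν z τ) ^ 2 - z / 2 * ν z τ) ζ)
          + deriv (deriv fun z => z * (ν z τ) ^ 2) ζ := by
  subst hν
  refine ⟨fun ζ => by simp [zero_rpow hγ0.ne', mittagLeffler_zero], fun ζ τ hτ => ?_⟩
  change caputoDeriv γ (fun t => ζ * mittagLeffler γ (t ^ γ)) τ = _
  rw [caputoDeriv_const_mul, caputoDeriv_mittagLeffler_rpow hγ0 hγ1 hτ,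
    fokkerPlanck_rhs_mul_const]
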